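/- arXiv:1610.04658 — 5 statements merged into one kernel-verified Lean document; each statement's English description precedes it below -/
import Mathlib

section
/- The objective J_n = (2/M) * sum_{i=1}^{K} q_i * sum_{j=1}^{M} |p_j - p_{j|i}| is nonnegative and at most (4/M)(1 - 1/M). -/
/-- The objective `J = (2/M) * ∑ i, q i * ∑ j, |p_j - p_{j|i}|`
is nonnegative and at most `(4/M)(1 - 1/M)`. -/
theorem stmt0 (M K : ℕ) (hM : 2 ≤ M) (hK : 1 ≤ K)
    (q : Fin K → ℝ) (hq : ∀ i, 0 ≤ q i) (hq1 : ∑ i, q i = 1)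
    (p : Fin K → Fin M → ℝ) (hp : ∀ i j, 0 ≤ p i j) (hp1 : ∀ i, ∑ j, p i j = 1)
    (pj : Fin M → ℝ) (hpj : ∀ j, pj j = ∑ i, q i * p i j)
    (J : ℝ) (hJ : J = (2 / M) * ∑ i, q i * ∑ j, |pj j - p i j|) :
    0 ≤ J ∧ J ≤ (4 / M) * (1 - 1 / M) := by
  have hM0 : (0:ℝ) < (M:ℝ) := by
    have : 0 < M := by omega
    exact_mod_cast this
  have hple1 : ∀ i j, p i j ≤ 1 := fun i j => by
    rw [← hp1 i]
    exact Finset.single_le_sum (fun k _ => hp i k) (Finset.mem_univ j)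
  have hpj0 : ∀ j, 0 ≤ pj j := fun j => by
    rw [hpj]; exact Finset.sum_nonneg fun i _ => mul_nonneg (hq i) (hp i j)
  have hpj1 : ∀ j, pj j ≤ 1 := fun j => by
    rw [hpj, ← hq1]
    exact Finset.sum_le_sum fun i _ => mul_le_of_le_one_right (hq i) (hple1 i j)
  have hsumpj : ∑ j, pj j = 1 := by
    simp_rw [hpj]
    rw [Finset.sum_comm]
    simp_rw [← Finset.mul_sum, hp1, mul_one]
    exact hq1
  have habs : ∀ a b : ℝ, |a - b| = a + b - 2 * min a b := by
    intro a b; rcases le_total a b with h | h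
    · rw [abs_of_nonpos (by linarith), min_eq_left h]; ring
    · rw [abs_of_nonneg (by linarith), min_eq_right h]; ring
  constructor
  · rw [hJ]
    apply mul_nonneg (by positivity)
    exact Finset.sum_nonneg fun i _ => mul_nonneg (hq i)
      (Finset.sum_nonneg fun j _ => abs_nonneg _)
  · have h1 : ∀ i : Fin K, ∑ j, |pj j - p i j| = 2 - 2 * ∑ j, min (pj j) (p i j) := by
      intro i
      simp_rw [habs]
      rw [Finset.sum_sub_distrib, Finset.sum_add_distrib, ← Finset.mul_sum, hsumpj, hp1]
      ring
    -- Cauchy-Schwarz: 1/M ≤ ∑ pj²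
    have hcs : (1:ℝ)/M ≤ ∑ j, (pj j)^2 := by
      have h0 : (0:ℝ) ≤ ∑ j, (pj j - 1/M)^2 :=
        Finset.sum_nonneg fun j _ => sq_nonneg _
      have hexp : ∑ j, (pj j - 1/M)^2
          = ∑ j, ((pj j)^2 - (2/M) * pj j + 1/(M:ℝ)^2) := by
        apply Finset.sum_congr rfl
        intro j _
        field_simp
        ring
      rw [hexp, Finset.sum_add_distrib, Finset.sum_sub_distrib, ← Finset.mul_sum,
        hsumpj, Finset.sum_const, Finset.card_univ, Fintype.card_fin,
        nsmul_eq_mul] at h0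
      have hMM : (M:ℝ) * (1/(M:ℝ)^2) = 1/M := by field_simp
      have h2M : (2:ℝ)/M * 1 = 2 * (1/M) := by ring
      linarith
    have h2 : ∑ j, (pj j)^2 ≤ ∑ i, q i * ∑ j, min (pj j) (p i j) := by
      have heq : ∑ i, q i * ∑ j, pj j * p i j = ∑ j, (pj j)^2 := by
        simp_rw [Finset.mul_sum]
        rw [Finset.sum_comm]
        congr 1; ext j
        rw [sq, hpj, Finset.mul_sum]
        congr 1; ext i; ring
      rw [← heq]
      apply Finset.sum_le_sum
      intro i _
      apply mul_le_mul_of_nonneg_left _ (hq i)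
      apply Finset.sum_le_sum
      intro j _
      exact le_min (mul_le_of_le_one_right (hpj0 j) (hple1 i j))
        (mul_le_of_le_one_left (hp i j) (hpj1 j))
    have key : ∑ i, q i * ∑ j, |pj j - p i j| ≤ 2 - 2 / M := by
      have hS : (1:ℝ)/M ≤ ∑ i, q i * ∑ j, min (pj j) (p i j) := le_trans hcs h2
      calc ∑ i, q i * ∑ j, |pj j - p i j|
          = ∑ i, (2 * q i - 2 * (q i * ∑ j, min (pj j) (p i j))) := by
            apply Finset.sum_congr rfl
            intro i _
            rw [h1 i]; ring
        _ = 2 - 2 * ∑ i, q i * ∑ j, min (pj j) (p i j) := by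
            rw [Finset.sum_sub_distrib, ← Finset.mul_sum, ← Finset.mul_sum, hq1]
            ring
        _ ≤ 2 - 2/M := by
            have h2M : (2:ℝ)/M = 2 * (1/M) := by ring
            linarith
    rw [hJ]
    have h3 : (2:ℝ)/M * (2 - 2/M) = 4/M * (1 - 1/M) := by ring
    calc (2/M : ℝ) * ∑ i, q i * ∑ j, |pj j - p i j|
        ≤ 2/M * (2 - 2/M) := by
          apply mul_le_mul_of_nonneg_left key (by positivity)
      _ = 4/M * (1 - 1/M) := h3
end

section
/- If a split is perfectly balanced (p_j = 1/M for all j) and perfectly pure (each p_{j|i} ∈ {0,1}), then J attains its maximum value J* = (4/M)(1 - 1/M). -/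
/-- If a split is perfectly balanced (`p_j = 1/M` for all `j`) and
perfectly pure (each `p_{j|i} ∈ {0,1}`), then `J` attains its maximum value
`J* = (4/M)(1 - 1/M)`. -/
theorem stmt1 (M K : ℕ) (hM : 2 ≤ M) (hK : 1 ≤ K)
    (q : Fin K → ℝ) (hq : ∀ i, 0 < q i) (hq1 : ∑ i, q i = 1)
    (p : Fin K → Fin M → ℝ) (hp : ∀ i j, 0 ≤ p i j) (hp1 : ∀ i, ∑ j, p i j = 1)
    (pj : Fin M → ℝ) (hpj : ∀ j, pj j = ∑ i, q i * p i j)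
    (hbal : ∀ j, pj j = 1 / M)
    (hpure : ∀ i j, p i j = 0 ∨ p i j = 1)
    (J : ℝ) (hJ : J = (2 / M) * ∑ i, q i * ∑ j, |pj j - p i j|) :
    J = (4 / M) * (1 - 1 / M) := by
  have hMR : (2:ℝ) ≤ (M:ℝ) := by exact_mod_cast hM
  have hM0 : (0:ℝ) < (M:ℝ) := by linarith
  have key : ∀ i, ∑ j, |pj j - p i j| = 2 - 2 / M := by
    intro i
    have habs : ∀ j, |pj j - p i j| = 1 / M + p i j * (1 - 2 / M) := by
      intro j
      rw [hbal]
      rcases hpure i j with h | h <;> rw [h]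
      · rw [sub_zero, abs_of_nonneg (by positivity)]; ring
      · rw [abs_of_nonpos (by rw [sub_nonpos, div_le_one hM0]; linarith)]
        field_simp; ring
    rw [Finset.sum_congr rfl (fun j _ => habs j), Finset.sum_add_distrib,
      ← Finset.sum_mul, hp1, Finset.sum_const, Finset.card_univ, Fintype.card_fin,
      nsmul_eq_mul]
    field_simp; ring
  have : ∑ i, q i * ∑ j, |pj j - p i j| = 2 - 2 / M := by
    rw [Finset.sum_congr rfl (fun i _ => by rw [key i]), ← Finset.sum_mul, hq1, one_mul]
  rw [hJ, this]
  field_simp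
  ring
end

section
/- If a split is perfectly pure, then its balancedness factor min_j p_j is at least 1/M - sqrt(M(J* - J))/2, where J* = (4/M)(1 - 1/M). -/
/-- If a split is perfectly pure, then its balancedness factor
`min_j p_j` is at least `1/M - sqrt(M (J* - J)) / 2`, where `J* = (4/M)(1 - 1/M)`. -/
theorem stmt4 (M K : ℕ) (hM : 2 ≤ M) (hK : 1 ≤ K)
    (q : Fin K → ℝ) (hq : ∀ i, 0 ≤ q i) (hq1 : ∑ i, q i = 1)
    (p : Fin K → Fin M → ℝ)
    (hpure : ∀ i j, p i j = 0 ∨ p i j = 1)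
    (hone : ∀ i, ∃! j, p i j = 1)
    (pj : Fin M → ℝ) (hpj : ∀ j, pj j = ∑ i, q i * p i j)
    (J Jstar : ℝ) (hJ : J = (2 / M) * ∑ i, q i * ∑ j, |pj j - p i j|)
    (hJstar : Jstar = (4 / M) * (1 - 1 / M)) :
    1 / M - Real.sqrt (M * (Jstar - J)) / 2 ≤
      Finset.univ.inf' ⟨⟨0, by omega⟩, Finset.mem_univ _⟩ pj := by
  have hM0 : (0:ℝ) < M := by exact_mod_cast (by omega : 0 < M)
  have hMne : (M:ℝ) ≠ 0 := ne_of_gt hM0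
  have hpj_nonneg : ∀ j, 0 ≤ pj j := by
    intro j; rw [hpj]
    exact Finset.sum_nonneg fun i _ => mul_nonneg (hq i) (by rcases hpure i j with h | h <;> simp [h])
  have hsum_pi : ∀ i, ∑ j, p i j = 1 := by
    intro i; obtain ⟨j0, hj0, huniq⟩ := hone i
    rw [Finset.sum_eq_single j0]
    · exact hj0
    · intro j _ hne
      rcases hpure i j with h | h
      · exact h
      · exact absurd (huniq j h) hne
    · simp
  have hsum_pj : ∑ j, pj j = 1 := by
    simp only [hpj]
    rw [Finset.sum_comm]
    calc ∑ i, ∑ j, q i * p i j = ∑ i, q i * ∑ j, p i j := by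
          simp [Finset.mul_sum]
      _ = 1 := by simp only [hsum_pi, mul_one]; exact hq1
  have hpj_le1 : ∀ j, pj j ≤ 1 := by
    intro j
    calc pj j ≤ ∑ j', pj j' :=
          Finset.single_le_sum (fun j' _ => hpj_nonneg j') (Finset.mem_univ j)
      _ = 1 := hsum_pj
  -- pointwise absolute value formula
  have habs : ∀ i j, |pj j - p i j| = pj j + p i j - 2 * (pj j * p i j) := by
    intro i j
    rcases hpure i j with h | h
    · rw [h]; rw [abs_of_nonneg (by simpa using hpj_nonneg j)]; ring
    · rw [h]; rw [abs_of_nonpos (by linarith [hpj_le1 j])]; ring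
  have hinner : ∀ i, ∑ j, |pj j - p i j| = 2 - 2 * ∑ j, pj j * p i j := by
    intro i
    simp only [habs]
    rw [Finset.sum_sub_distrib, Finset.sum_add_distrib, hsum_pj, hsum_pi, ← Finset.mul_sum]
    ring
  set T : ℝ := ∑ j, pj j ^ 2 with hT
  have hswap : ∑ i, q i * ∑ j, pj j * p i j = T := by
    calc ∑ i, q i * ∑ j, pj j * p i j
        = ∑ i, ∑ j, pj j * (q i * p i j) := by
          simp only [Finset.mul_sum]
          exact Finset.sum_congr rfl fun i _ => Finset.sum_congr rfl fun j _ => by ring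
      _ = ∑ j, ∑ i, pj j * (q i * p i j) := Finset.sum_comm
      _ = ∑ j, pj j * ∑ i, q i * p i j := by simp only [Finset.mul_sum]
      _ = T := by
          rw [hT]
          exact Finset.sum_congr rfl fun j _ => by rw [← hpj j, sq]
  have hJval : J = 4 / M * (1 - T) := by
    have e1 : ∑ i, q i * (2 - 2 * ∑ j, pj j * p i j)
        = 2 * ∑ i, q i - 2 * ∑ i, q i * ∑ j, pj j * p i j := by
      have e0 : ∀ i ∈ Finset.univ, q i * (2 - 2 * ∑ j, pj j * p i j)
          = 2 * q i - 2 * (q i * ∑ j, pj j * p i j) := fun i _ => by ring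
      rw [Finset.sum_congr rfl e0, Finset.sum_sub_distrib, ← Finset.mul_sum, ← Finset.mul_sum]
    rw [hJ]; simp only [hinner]; rw [e1, hq1, hswap]; ring
  set S : ℝ := ∑ j, (pj j - 1 / M) ^ 2 with hS
  have hSval : S = T - 1 / M := by
    have h1 : S = ∑ j, (pj j ^ 2 - 2 * (1/M) * pj j + (1/M)^2) := by
      apply Finset.sum_congr rfl; intro j _; ring
    rw [h1, Finset.sum_add_distrib, Finset.sum_sub_distrib, ← Finset.mul_sum, hsum_pj,
      Finset.sum_const, Finset.card_univ, Fintype.card_fin, nsmul_eq_mul]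
    field_simp
    ring
  have hkey : M * (Jstar - J) = 4 * S := by
    rw [hJval, hJstar, hSval]
    field_simp
    ring
  have hsqrt : Real.sqrt (M * (Jstar - J)) = 2 * Real.sqrt S := by
    rw [hkey, show (4:ℝ) * S = 2^2 * S by ring, Real.sqrt_mul (by positivity) S,
      Real.sqrt_sq (by norm_num)]
  apply Finset.le_inf'
  intro j _
  have h1 : (pj j - 1/M)^2 ≤ S := by
    rw [hS]
    exact Finset.single_le_sum (f := fun j' => (pj j' - 1/(M:ℝ))^2)
      (fun j' _ => sq_nonneg _) (Finset.mem_univ j)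
  have h2 : 1/M - pj j ≤ Real.sqrt S := by
    calc 1/M - pj j ≤ |pj j - 1/M| := by rw [abs_sub_comm]; exact le_abs_self _
      _ = Real.sqrt ((pj j - 1/M)^2) := (Real.sqrt_sq_eq_abs _).symm
      _ ≤ Real.sqrt S := Real.sqrt_le_sqrt h1
  rw [hsqrt]
  push_cast
  linarith
end

section
/- The entropy decrease of a split satisfies Δ := H(p̄) - sum_j w_j H(p^j) ≥ (M^2/8) * J^2, where J = (2/M) * sum_j sum_i q_i |p_j - p_{j|i}| and the split is perfectly balanced (each p_j = 1/M), with weights w_j = p_j. -/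
/-!
The entropy decrease of a split is the mutual information between class and child, i.e. the
`p_j`-weighted mean of the divergences `KL(p^j ‖ q)`. Pinsker bounds each of them below by
`‖p^j - q‖₁² / 2`. For a balanced split `q_i |p_j - p_{j|i}| = |p^j_i - q_i| / M`, so
`J = (2 / M) · mean_j ‖p^j - q‖₁`, and Jensen's inequality `(mean x)² ≤ mean x²` bounds
the mean of the squared distances below by `(M J / 2)²`, whence
`Δ ≥ (M J / 2)² / 2 = M² J² / 8`.
-/

open Finset Real

lemma hasDerivAt_log_sub_pade {s : ℝ} (hs : 0 < s) :
    HasDerivAt (fun t => log t - (t - 1) * (5 * t + 1) / (2 * t * (t + 2)))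
      (4 * (s - 1) ^ 3 / (2 * s * (s + 2)) ^ 2) s := by
  have hnum := ((hasDerivAt_id' s).sub_const 1).fun_mul
    (((hasDerivAt_id' s).const_mul 5).add_const 1)
  have hden := ((hasDerivAt_id' s).const_mul 2).fun_mul ((hasDerivAt_id' s).add_const 2)
  refine ((hasDerivAt_log hs.ne').sub (hnum.fun_div hden (by positivity))).congr_deriv ?_
  field_simp
  ring

lemma pade_le_log {t : ℝ} (ht : 0 < t) :
    (t - 1) * (5 * t + 1) / (2 * t * (t + 2)) ≤ log t := by
  set ψ : ℝ → ℝ := fun t => log t - (t - 1) * (5 * t + 1) / (2 * t * (t + 2))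
  have hψ1 : ψ 1 = 0 := by norm_num [ψ]
  have hcont : ∀ D ⊆ Set.Ioi (0 : ℝ), ContinuousOn ψ D := fun D hD x hx =>
    (hasDerivAt_log_sub_pade (hD hx)).continuousAt.continuousWithinAt
  suffices 0 ≤ ψ t by simpa [ψ] using this
  rcases le_total 1 t with h1t | ht1
  · have hmono : MonotoneOn ψ (Set.Ici 1) := by
      refine monotoneOn_of_hasDerivWithinAt_nonneg (convex_Ici 1)
        (hcont _ fun x (hx : 1 ≤ x) => zero_lt_one.trans_le hx)
        (fun x hx => (hasDerivAt_log_sub_pade ?_).hasDerivWithinAt) fun x hx => ?_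
      · rw [interior_Ici] at hx; exact zero_lt_one.trans hx
      · rw [interior_Ici] at hx
        have : 0 ≤ x - 1 := by linarith [Set.mem_Ioi.mp hx]
        positivity
    exact hψ1 ▸ hmono Set.self_mem_Ici h1t h1t
  · have hanti : AntitoneOn ψ (Set.Ioc 0 1) := by
      refine antitoneOn_of_hasDerivWithinAt_nonpos (convex_Ioc 0 1) (hcont _ fun x hx => hx.1)
        (fun x hx => (hasDerivAt_log_sub_pade ?_).hasDerivWithinAt) fun x hx => ?_
      · rw [interior_Ioc] at hx; exact hx.1
      · rw [interior_Ioc] at hx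
        have : (x - 1) ^ 3 ≤ 0 := Odd.pow_nonpos (by decide) (by linarith [hx.2])
        exact div_nonpos_of_nonpos_of_nonneg (by linarith) (sq_nonneg _)
    exact hψ1 ▸ hanti ⟨ht, ht1⟩ ⟨zero_lt_one, le_rfl⟩ ht1

lemma sub_le_mul_log_div {x y : ℝ} (hx : 0 ≤ x) (hy : 0 ≤ y) (hxy : y = 0 → x = 0) :
    x - y ≤ x * log (x / y) := by
  rcases hx.eq_or_lt with rfl | hx
  · simpa using hy
  have hy : 0 < y := hy.lt_of_ne fun h => hx.ne' (hxy h.symm)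
  have := one_sub_inv_le_log_of_pos (div_pos hx hy)
  rw [inv_div] at this
  calc x - y = x * (1 - y / x) := by field_simp
    _ ≤ x * log (x / y) := mul_le_mul_of_nonneg_left this hx.le

lemma sq_sub_le_mul_log_div {x y : ℝ} (hx : 0 ≤ x) (hy : 0 ≤ y) (hxy : y = 0 → x = 0) :
    (x - y) ^ 2 ≤ 2 / 3 * (x * log (x / y) - x + y) * (x + 2 * y) := by
  rcases hy.eq_or_lt with rfl | hy
  · simp [hxy rfl]
  rcases hx.eq_or_lt with rfl | hx
  · simp only [zero_mul, zero_sub, zero_add, sub_zero]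
    nlinarith
  have hpade := mul_le_mul_of_nonneg_left (pade_le_log (div_pos hx hy)) hx.le
  have key : (x - y) ^ 2 = 2 / 3 *
      (x * ((x / y - 1) * (5 * (x / y) + 1) / (2 * (x / y) * (x / y + 2))) - x + y) *
      (x + 2 * y) := by
    field_simp
    ring
  rw [key]
  gcongr

section

variable {ι : Type*} [Fintype ι]

noncomputable def shannonEntropy (v : ι → ℝ) : ℝ := ∑ i, v i * log (1 / v i)

noncomputable def klDivergence (a b : ι → ℝ) : ℝ := ∑ i, a i * log (a i / b i)

/-- Pinsker's inequality. The Padé bound `pade_le_log` gives the pointwise estimate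
`3 (a - b)² ≤ 2 (a + 2b) (a log (a / b) - a + b)`, and the weights `a_i + 2 b_i` sum to `3`, so
Cauchy–Schwarz against them finishes the proof. -/
theorem sq_sum_abs_sub_div_two_le_klDivergence {a b : ι → ℝ} (ha : ∀ i, 0 ≤ a i)
    (hb : ∀ i, 0 ≤ b i) (ha1 : ∑ i, a i = 1) (hb1 : ∑ i, b i = 1)
    (hab : ∀ i, b i = 0 → a i = 0) :
    (∑ i, |a i - b i|) ^ 2 / 2 ≤ klDivergence a b := by
  unfold klDivergence
  have hsum : ∑ i, (a i * log (a i / b i) - a i + b i) = ∑ i, a i * log (a i / b i) := by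
    rw [sum_add_distrib, sum_sub_distrib, ha1, hb1, sub_add_cancel]
  have hweights : ∑ i, (a i + 2 * b i) = 3 := by
    rw [sum_add_distrib, ← mul_sum, ha1, hb1]; norm_num
  have hcs := sum_sq_le_sum_mul_sum_of_sq_le_mul univ
    (r := fun i => |a i - b i|) (f := fun i => 2 / 3 * (a i * log (a i / b i) - a i + b i))
    (g := fun i => a i + 2 * b i)
    (fun i _ => by linarith [sub_le_mul_log_div (ha i) (hb i) (hab i)])
    (fun i _ => by have := ha i; have := hb i; positivity)
    (fun i _ => by rw [sq_abs]; exact sq_sub_le_mul_log_div (ha i) (hb i) (hab i))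
  rw [← mul_sum, hsum, hweights] at hcs
  linarith

theorem shannonEntropy_sub_sum_mul_shannonEntropy {κ : Type*} [Fintype κ] {q : ι → ℝ}
    {w : κ → ℝ} {c : κ → ι → ℝ} (hmix : ∀ i, ∑ j, w j * c j i = q i)
    (habs : ∀ j i, q i = 0 → c j i = 0) :
    shannonEntropy q - ∑ j, w j * shannonEntropy (c j) = ∑ j, w j * klDivergence (c j) q := by
  have hterm : ∀ j i, c j i * log (1 / q i) - c j i * log (1 / c j i)
      = c j i * log (c j i / q i) := fun j i => by
    rcases eq_or_ne (c j i) 0 with hc | hc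
    · simp [hc]
    · rw [one_div, one_div, log_inv, log_inv, log_div hc (mt (habs j i) hc)]
      ring
  calc shannonEntropy q - ∑ j, w j * shannonEntropy (c j)
      = ∑ j, w j * ∑ i, (c j i * log (1 / q i) - c j i * log (1 / c j i)) := by
        simp only [shannonEntropy, ← hmix, sum_mul, mul_sum, mul_sub, sum_sub_distrib, mul_assoc]
        rw [sum_comm]
    _ = ∑ j, w j * klDivergence (c j) q := by simp only [hterm, klDivergence]

end

section

variable {ι κ : Type*} {q : ι → ℝ} {p : ι → κ → ℝ} {pj : κ → ℝ}
  {pc : κ → ι → ℝ}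

lemma sum_mul_conditional_eq [Fintype κ] (hpc : ∀ j i, pc j i = q i * p i j / pj j)
    (hp1 : ∀ i, ∑ j, p i j = 1) (hpj0 : ∀ j, pj j ≠ 0) (i : ι) :
    ∑ j, pj j * pc j i = q i := by
  simp only [hpc, mul_div_cancel₀ _ (hpj0 _), ← mul_sum, hp1, mul_one]

lemma sum_conditional_eq_one [Fintype ι] (hpc : ∀ j i, pc j i = q i * p i j / pj j)
    (hpj : ∀ j, pj j = ∑ i, q i * p i j) {j : κ} (hpj0 : pj j ≠ 0) : ∑ i, pc j i = 1 := by
  simp only [hpc, ← sum_div, ← hpj, div_self hpj0]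

lemma sum_mul_abs_sub_eq [Fintype ι] (hpc : ∀ j i, pc j i = q i * p i j / pj j)
    (hq : ∀ i, 0 ≤ q i) {j : κ} (hpj0 : 0 < pj j) :
    ∑ i, q i * |pj j - p i j| = pj j * ∑ i, |pc j i - q i| := by
  rw [mul_sum]
  refine sum_congr rfl fun i _ => ?_
  rw [hpc, ← abs_of_pos hpj0, ← abs_mul, abs_of_pos hpj0, mul_sub, mul_div_cancel₀ _ hpj0.ne',
    ← abs_of_nonneg (hq i), ← abs_mul, abs_of_nonneg (hq i), abs_sub_comm]
  ring_nf

end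

theorem stmt8_general (M K : ℕ) (hM : 2 ≤ M)
    (q : Fin K → ℝ) (hq : ∀ i, 0 ≤ q i) (hq1 : ∑ i, q i = 1)
    (p : Fin K → Fin M → ℝ) (hp : ∀ i j, 0 ≤ p i j) (hp1 : ∀ i, ∑ j, p i j = 1)
    (pj : Fin M → ℝ) (hpj : ∀ j, pj j = ∑ i, q i * p i j)
    (hbal : ∀ j, pj j = 1 / M)
    (pc : Fin M → Fin K → ℝ) (hpc : ∀ j i, pc j i = q i * p i j / pj j)
    (H : (Fin K → ℝ) → ℝ)
    (hH : ∀ v, H v = ∑ i, v i * Real.log (1 / v i))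
    (J : ℝ) (hJ : J = (2 / M) * ∑ j, ∑ i, q i * |pj j - p i j|) :
    (M ^ 2 / 8) * J ^ 2 ≤ H q - ∑ j, pj j * H (pc j) := by
  obtain rfl : H = shannonEntropy := funext hH
  have hM0 : (0 : ℝ) < M := by positivity
  have hpj0 : ∀ j, 0 < pj j := fun j => by rw [hbal]; positivity
  have habs : ∀ j i, q i = 0 → pc j i = 0 := fun j i h => by simp [hpc, h]
  set D : Fin M → ℝ := fun j => ∑ i, |pc j i - q i|
  have hJD : J = 2 / M ^ 2 * ∑ j, D j := by
    rw [hJ, sum_congr rfl fun j _ => sum_mul_abs_sub_eq hpc hq (hpj0 j)]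
    simp only [hbal, ← mul_sum]
    ring
  have hpinsker (j : Fin M) : D j ^ 2 / 2 ≤ klDivergence (pc j) q :=
    sq_sum_abs_sub_div_two_le_klDivergence
      (fun i => hpc j i ▸ div_nonneg (mul_nonneg (hq i) (hp i j)) (hpj0 j).le) hq
      (sum_conditional_eq_one hpc hpj (hpj0 j).ne') hq1 (habs j)
  rw [shannonEntropy_sub_sum_mul_shannonEntropy
    (sum_mul_conditional_eq hpc hp1 fun j => (hpj0 j).ne') habs]
  calc (M ^ 2 / 8) * J ^ 2 = (∑ j, D j) ^ 2 / (2 * M ^ 2) := by rw [hJD]; field_simp; ring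
    _ ≤ M * (∑ j, D j ^ 2) / (2 * M ^ 2) := by
      gcongr
      simpa using sq_sum_le_card_mul_sum_sq (s := univ) (f := D)
    _ = ∑ j, pj j * (D j ^ 2 / 2) := by simp only [hbal, ← mul_sum, ← sum_div]; field_simp
    _ ≤ ∑ j, pj j * klDivergence (pc j) q := by gcongr with j; exacts [(hpj0 j).le, hpinsker j]

/-- For a perfectly balanced split (each `p_j = 1/M`, used as weights),
the entropy decrease satisfies `Δ := H(p̄) - ∑ j, p_j H(p^j) ≥ (M²/8) J²`, where
`p^j_i = q_i p_{j|i} / p_j`, `p̄ = ∑ j p_j p^j = q`, and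
`J = (2/M) ∑ j ∑ i, q_i |p_j - p_{j|i}|`. `H` is the natural-log Shannon entropy. -/
theorem stmt8 (M K : ℕ) (hM : 2 ≤ M) (hK : 2 ≤ K)
    (q : Fin K → ℝ) (hq : ∀ i, 0 ≤ q i) (hq1 : ∑ i, q i = 1)
    (p : Fin K → Fin M → ℝ) (hp : ∀ i j, 0 ≤ p i j) (hp1 : ∀ i, ∑ j, p i j = 1)
    (pj : Fin M → ℝ) (hpj : ∀ j, pj j = ∑ i, q i * p i j)
    (hbal : ∀ j, pj j = 1 / M)
    (pc : Fin M → Fin K → ℝ) (hpc : ∀ j i, pc j i = q i * p i j / pj j)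
    (H : (Fin K → ℝ) → ℝ)
    (hH : ∀ v, H v = ∑ i, v i * Real.log (1 / v i))
    (J : ℝ) (hJ : J = (2 / M) * ∑ j, ∑ i, q i * |pj j - p i j|) :
    (M ^ 2 / 8) * J ^ 2 ≤ H q - ∑ j, pj j * H (pc j) :=
  stmt8_general M K hM q hq hq1 p hp hp1 pj hpj hbal pc hpc H hH J hJ
end

section
/- The entropy decrease of a split satisfies Δ := H(q) - sum_j p_j H(p^j) ≥ (M^2 / (8(M(1-2γ)+2γ))) * J^2, provided every p_j ≤ (M(1-2γ)+2γ)/M. -/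
/-!
By the chain rule for entropy, `H(q) - ∑ⱼ pⱼ H(pʲ) = ∑ⱼ pⱼ D(pʲ ‖ q)`, and
`pⱼ ‖pʲ - q‖₁ = ∑ᵢ qᵢ |pⱼ - p_{j|i}|`. Pinsker's inequality and Jensen's inequality for the
weights `pⱼ` give `Δ ≥ ½ (∑ⱼ pⱼ ‖pʲ - q‖₁)² = M² J² / 8`, and summing the bound on the `pⱼ` over
`j` shows `M(1-2γ)+2γ ≥ 1`.

Pinsker's inequality follows from Cauchy–Schwarz with weights `aᵢ + 2bᵢ` and the pointwise bound
`3(x-1)² ≤ 2(x+2)(x log x - x + 1)`, whose difference is convex on `[0, ∞)` with a double zero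
at `1`.
-/

open Real InformationTheory Set

lemma three_mul_sq_sub_one_le_klFun {x : ℝ} (hx : 0 ≤ x) :
    3 * (x - 1) ^ 2 ≤ 2 * (x + 2) * klFun x := by
  let g : ℝ → ℝ := fun x ↦ 2 * (x + 2) * klFun x - 3 * (x - 1) ^ 2
  let g' : ℝ → ℝ := fun x ↦ 2 * klFun x + 2 * (x + 2) * log x - 6 * (x - 1)
  have hg : ∀ x ≠ 0, HasDerivAt g (g' x) x := fun x hx ↦
    ((((hasDerivAt_id' x).add_const 2).const_mul 2).mul (hasDerivAt_klFun hx)).sub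
      ((((hasDerivAt_id' x).sub_const 1).pow 2).const_mul 3)
      |>.congr_deriv (by simp only [g']; ring)
  have hg' : ∀ x ≠ 0, HasDerivAt g' (4 * (log x + x⁻¹ - 1)) x := fun x hx ↦
    (((hasDerivAt_klFun hx).const_mul 2).add
      ((((hasDerivAt_id' x).add_const 2).const_mul 2).mul (hasDerivAt_log hx))).sub
      (((hasDerivAt_id' x).sub_const 1).const_mul 6) |>.congr_deriv (by field_simp; ring)
  have hconvex : ConvexOn ℝ (Ici 0) g := by
    refine convexOn_of_hasDerivWithinAt2_nonneg (f' := g') (f'' := fun x ↦ 4 * (log x + x⁻¹ - 1))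
      (convex_Ici 0) (by fun_prop) ?_ ?_ ?_ <;>
      simp only [interior_Ici, mem_Ioi]
    · exact fun x hx ↦ (hg x hx.ne').hasDerivWithinAt
    · exact fun x hx ↦ (hg' x hx.ne').hasDerivWithinAt
    · intro x hx
      linarith [one_sub_inv_le_log_of_pos hx]
  have hmin : IsMinOn g (Ici 0) 1 := by
    refine hconvex.isMinOn_of_rightDeriv_eq_zero (by simp) ?_
    rw [(hg 1 one_ne_zero).hasDerivWithinAt.derivWithin (uniqueDiffWithinAt_Ioi 1)]
    simp [g', klFun_one]
  have : g 1 ≤ g x := hmin hx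
  simp only [g, klFun_one] at this
  linarith

lemma three_mul_sq_sub_le_mul_klFun_div {a b : ℝ} (ha : 0 ≤ a) (hb : 0 ≤ b)
    (hab : b = 0 → a = 0) : 3 * (a - b) ^ 2 ≤ 2 * (a + 2 * b) * (b * klFun (a / b)) := by
  rcases hb.eq_or_lt with rfl | hb
  · simp [hab rfl]
  calc 3 * (a - b) ^ 2 = b ^ 2 * (3 * (a / b - 1) ^ 2) := by field_simp
    _ ≤ b ^ 2 * (2 * (a / b + 2) * klFun (a / b)) :=
        mul_le_mul_of_nonneg_left (three_mul_sq_sub_one_le_klFun (div_nonneg ha hb.le))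
          (sq_nonneg b)
    _ = 2 * (a + 2 * b) * (b * klFun (a / b)) := by field_simp

lemma mul_klFun_div_eq {a b : ℝ} (hab : b = 0 → a = 0) :
    b * klFun (a / b) = a * log (a / b) - a + b := by
  rcases eq_or_ne b 0 with rfl | hb
  · simp [hab rfl]
  · rw [klFun]; field_simp; ring

lemma mul_log_one_div_add_mul_log_div {x y : ℝ} (hxy : y = 0 → x = 0) :
    x * log (1 / x) + x * log (x / y) = x * log (1 / y) := by
  rcases eq_or_ne x 0 with rfl | hx
  · simp
  have hy : y ≠ 0 := fun h ↦ hx (hxy h)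
  rw [← mul_add, one_div, one_div, log_inv, log_inv, log_div hx hy]
  ring

section
variable {ι κ : Type*} [Fintype ι]

noncomputable def entropy (v : ι → ℝ) : ℝ := ∑ i, v i * log (1 / v i)

noncomputable def relEntropy (a b : ι → ℝ) : ℝ := ∑ i, a i * log (a i / b i)

theorem sq_sum_abs_sub_le_two_mul_relEntropy {a b : ι → ℝ} (ha : ∀ i, 0 ≤ a i)
    (hb : ∀ i, 0 ≤ b i) (ha1 : ∑ i, a i = 1) (hb1 : ∑ i, b i = 1)
    (hab : ∀ i, b i = 0 → a i = 0) :
    (∑ i, |a i - b i|) ^ 2 ≤ 2 * relEntropy a b := by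
  have hkl : ∀ i, 0 ≤ b i * klFun (a i / b i) := fun i ↦
    mul_nonneg (hb i) (klFun_nonneg (div_nonneg (ha i) (hb i)))
  calc (∑ i, |a i - b i|) ^ 2
      ≤ (∑ i, (a i + 2 * b i)) * ∑ i, 2 / 3 * (b i * klFun (a i / b i)) := by
        refine Finset.sum_sq_le_sum_mul_sum_of_sq_le_mul _
          (fun i _ ↦ by linarith [ha i, hb i]) (fun i _ ↦ by linarith [hkl i]) fun i _ ↦ ?_
        rw [sq_abs]
        linarith [three_mul_sq_sub_le_mul_klFun_div (ha i) (hb i) (hab i)]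
    _ = 2 * ∑ i, (a i * log (a i / b i) - a i + b i) := by
        simp only [Finset.sum_add_distrib, ← Finset.mul_sum, ha1, hb1, mul_klFun_div_eq (hab _)]
        ring
    _ = 2 * relEntropy a b := by
        simp only [Finset.sum_add_distrib, Finset.sum_sub_distrib, ha1, hb1, relEntropy]
        ring

variable (q : ι → ℝ) (p : ι → κ → ℝ)

noncomputable def marginal (j : κ) : ℝ := ∑ i, q i * p i j

noncomputable def posterior (j : κ) (i : ι) : ℝ := q i * p i j / marginal q p j

variable {q p}

lemma sum_marginal [Fintype κ] (hq1 : ∑ i, q i = 1) (hp1 : ∀ i, ∑ j, p i j = 1) :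
    ∑ j, marginal q p j = 1 := by
  simp only [marginal]
  rw [Finset.sum_comm]
  simp [← Finset.mul_sum, hp1, hq1]

lemma marginal_mul_posterior {j : κ} (hj : marginal q p j ≠ 0) (i : ι) :
    marginal q p j * posterior q p j i = q i * p i j :=
  mul_div_cancel₀ _ hj

lemma posterior_nonneg (hq : ∀ i, 0 ≤ q i) (hp : ∀ i j, 0 ≤ p i j) (j : κ) (i : ι) :
    0 ≤ posterior q p j i :=
  div_nonneg (mul_nonneg (hq i) (hp i j)) (Finset.sum_nonneg fun i _ ↦ mul_nonneg (hq i) (hp i j))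

lemma sum_posterior {j : κ} (hj : marginal q p j ≠ 0) : ∑ i, posterior q p j i = 1 := by
  simp only [posterior]
  rw [← Finset.sum_div]
  exact div_self hj

lemma posterior_eq_zero {i : ι} (hi : q i = 0) (j : κ) : posterior q p j i = 0 := by
  simp [posterior, hi]

lemma marginal_mul_sum_abs_posterior_sub (hq : ∀ i, 0 ≤ q i) {j : κ} (hj : 0 < marginal q p j) :
    marginal q p j * ∑ i, |posterior q p j i - q i| = ∑ i, q i * |marginal q p j - p i j| := by
  rw [Finset.mul_sum]
  refine Finset.sum_congr rfl fun i _ ↦ ?_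
  calc marginal q p j * |posterior q p j i - q i|
      = |marginal q p j * (posterior q p j i - q i)| := by rw [abs_mul, abs_of_pos hj]
    _ = |q i * (p i j - marginal q p j)| := by
        rw [mul_sub, marginal_mul_posterior hj.ne']; congr 1; ring
    _ = q i * |marginal q p j - p i j| := by rw [abs_mul, abs_of_nonneg (hq i), abs_sub_comm]

theorem entropy_sub_sum_marginal_mul_entropy_posterior [Fintype κ] (hp1 : ∀ i, ∑ j, p i j = 1)
    (hm : ∀ j, marginal q p j ≠ 0) :
    entropy q - ∑ j, marginal q p j * entropy (posterior q p j) =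
      ∑ j, marginal q p j * relEntropy (posterior q p j) q := by
  suffices ∑ j, marginal q p j * (entropy (posterior q p j) + relEntropy (posterior q p j) q) =
      entropy q by
    simp only [mul_add, Finset.sum_add_distrib] at this
    linarith
  simp only [entropy, relEntropy, ← Finset.sum_add_distrib, Finset.mul_sum]
  rw [Finset.sum_comm]
  refine Finset.sum_congr rfl fun i _ ↦ ?_
  simp only [mul_log_one_div_add_mul_log_div fun h ↦ posterior_eq_zero h _, ← mul_assoc,
    marginal_mul_posterior (hm _)]
  rw [← Finset.sum_mul, ← Finset.mul_sum, hp1, mul_one]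

theorem sq_sum_sum_mul_abs_marginal_sub_le [Fintype κ] (hq : ∀ i, 0 ≤ q i) (hq1 : ∑ i, q i = 1)
    (hp : ∀ i j, 0 ≤ p i j) (hp1 : ∀ i, ∑ j, p i j = 1) (hm : ∀ j, 0 < marginal q p j) :
    (∑ j, ∑ i, q i * |marginal q p j - p i j|) ^ 2 ≤
      2 * (entropy q - ∑ j, marginal q p j * entropy (posterior q p j)) := by
  rw [entropy_sub_sum_marginal_mul_entropy_posterior hp1 fun j ↦ (hm j).ne', Finset.mul_sum]
  simp only [← marginal_mul_sum_abs_posterior_sub hq (hm _)]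
  calc (∑ j, marginal q p j * ∑ i, |posterior q p j i - q i|) ^ 2
      ≤ ∑ j, marginal q p j * (∑ i, |posterior q p j i - q i|) ^ 2 :=
        (convexOn_pow 2).map_sum_le (fun j _ ↦ (hm j).le) (sum_marginal hq1 hp1)
          fun j _ ↦ mem_Ici.2 (Finset.sum_nonneg fun i _ ↦ abs_nonneg _)
    _ ≤ ∑ j, 2 * (marginal q p j * relEntropy (posterior q p j) q) := by
        refine Finset.sum_le_sum fun j _ ↦ ?_
        rw [mul_left_comm]
        exact mul_le_mul_of_nonneg_left (sq_sum_abs_sub_le_two_mul_relEntropy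
          (posterior_nonneg hq hp j) hq (sum_posterior (hm j).ne') hq1
          fun i hi ↦ posterior_eq_zero hi j) (hm j).le

end

theorem stmt9_general (M K : ℕ) (hM : 2 ≤ M)
    (q : Fin K → ℝ) (hq : ∀ i, 0 ≤ q i) (hq1 : ∑ i, q i = 1)
    (p : Fin K → Fin M → ℝ) (hp : ∀ i j, 0 ≤ p i j) (hp1 : ∀ i, ∑ j, p i j = 1)
    (pj : Fin M → ℝ) (hpj : ∀ j, pj j = ∑ i, q i * p i j)
    (hpjpos : ∀ j, 0 < pj j)
    (γ : ℝ)
    (hub : ∀ j, pj j ≤ (M * (1 - 2 * γ) + 2 * γ) / M)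
    (pc : Fin M → Fin K → ℝ) (hpc : ∀ j i, pc j i = q i * p i j / pj j)
    (H : (Fin K → ℝ) → ℝ)
    (hH : ∀ v, H v = ∑ i, v i * Real.log (1 / v i))
    (J : ℝ) (hJ : J = (2 / M) * ∑ j, ∑ i, q i * |pj j - p i j|) :
    (M ^ 2 / (8 * (M * (1 - 2 * γ) + 2 * γ))) * J ^ 2 ≤
      H q - ∑ j, pj j * H (pc j) := by
  obtain rfl : pj = marginal q p := funext hpj
  obtain rfl : pc = posterior q p := funext fun j ↦ funext (hpc j)
  obtain rfl : H = entropy := funext hH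
  subst hJ
  have hMpos : (0 : ℝ) < M := by positivity
  set c := (M : ℝ) * (1 - 2 * γ) + 2 * γ
  have hc : 1 ≤ c := by
    calc 1 = ∑ j, marginal q p j := (sum_marginal hq1 hp1).symm
      _ ≤ ∑ _j : Fin M, c / M := Finset.sum_le_sum fun j _ ↦ hub j
      _ = c := by
        rw [Finset.sum_const, Finset.card_univ, Fintype.card_fin, nsmul_eq_mul]
        field_simp
  have hΔ := sq_sum_sum_mul_abs_marginal_sub_le hq hq1 hp hp1 hpjpos
  calc M ^ 2 / (8 * c) * (2 / M * ∑ j, ∑ i, q i * |marginal q p j - p i j|) ^ 2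
      = (∑ j, ∑ i, q i * |marginal q p j - p i j|) ^ 2 / (2 * c) := by field_simp; ring
    _ ≤ (∑ j, ∑ i, q i * |marginal q p j - p i j|) ^ 2 / 2 := by gcongr; linarith
    _ ≤ _ := by linarith

/-- The entropy decrease of a split satisfies
`Δ := H(q) - ∑ j, p_j H(p^j) ≥ (M² / (8(M(1-2γ)+2γ))) J²`, provided every
`p_j ≤ (M(1-2γ)+2γ)/M`. -/
theorem stmt9 (M K : ℕ) (hM : 2 ≤ M) (hK : 2 ≤ K)
    (q : Fin K → ℝ) (hq : ∀ i, 0 ≤ q i) (hq1 : ∑ i, q i = 1)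
    (p : Fin K → Fin M → ℝ) (hp : ∀ i j, 0 ≤ p i j) (hp1 : ∀ i, ∑ j, p i j = 1)
    (pj : Fin M → ℝ) (hpj : ∀ j, pj j = ∑ i, q i * p i j)
    (hpjpos : ∀ j, 0 < pj j)
    (γ : ℝ) (hγ0 : 0 < γ) (hγ1 : γ < 1)
    (hub : ∀ j, pj j ≤ (M * (1 - 2 * γ) + 2 * γ) / M)
    (pc : Fin M → Fin K → ℝ) (hpc : ∀ j i, pc j i = q i * p i j / pj j)
    (H : (Fin K → ℝ) → ℝ)
    (hH : ∀ v, H v = ∑ i, v i * Real.log (1 / v i))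
    (J : ℝ) (hJ : J = (2 / M) * ∑ j, ∑ i, q i * |pj j - p i j|) :
    (M ^ 2 / (8 * (M * (1 - 2 * γ) + 2 * γ))) * J ^ 2 ≤
      H q - ∑ j, pj j * H (pc j) :=
  stmt9_general M K hM q hq hq1 p hp hp1 pj hpj hpjpos γ hub pc hpc H hH J hJ
end
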